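/- arXiv:1006.0285 — 2 statements merged into one kernel-verified Lean document; each statement's English description precedes it below -/
import Mathlib

section
/- Let α = (√5 - 1)/2, g(x) = log(2 - 2cos(2πx)) and S_k(α) = ∑_{j=1}^{k} g(jα). Then there exists a constant C > 0 such that |S_k(α)| ≤ C (log k)² for all k ≥ 2. -/
/-!
Write `e(x) = exp(2πix)`, so that `g(x) = 2 Re log (1 - e(x))`, and let `‖x‖` be the distance
from `x` to the nearest integer. The golden mean is badly approximable, `r ‖rα‖ ≥ c = 1/3`, since
`(rα - p)(rα' - p) = p² + pr - r²` is a nonzero integer (`α'` the conjugate of `α`).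

Truncate the Taylor series of `log (1 - w)` at order `R = k²`. On the unit circle the remainder is
at most `2 / ((R + 1) |1 - w|)`, and `|1 - e(jα)| ≥ 4 ‖jα‖ ≥ 4c / j`, so the remainders add up to
`O(1)` over `j ≤ k`. After exchanging the two finite sums the Taylor part becomes
`∑_{r ≤ R} r⁻¹ ∑_{j ≤ k} e(rα)^j`, and each geometric sum is at most `1 / (2 ‖rα‖)`.
It remains to bound `∑_{r ≤ R} 1 / (r ‖rα‖)`. Group the `r` into dyadic classes
`2^y ≤ 1/‖rα‖ < 2^(y+1)`. Applied to `r' - r`, bad approximability shows that the members of a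
class are at least `c 2^y` and pairwise `c 2^(y-1)`-separated. Each class therefore contributes
`O(log R)`, and there are `O(log R)` classes.
-/

open Real Finset
open scoped goldenRatio

namespace Complex

lemma norm_one_add_le_two_mul_norm_one_add_mul {z : ℂ} (hz : ‖z‖ ≤ 1) {t : ℝ}
    (ht : t ∈ Set.Icc (0 : ℝ) 1) : ‖1 + z‖ ≤ 2 * ‖1 + t * z‖ := by
  obtain ⟨ht0, ht1⟩ := ht
  have hfar : ‖1 + z‖ ≤ ‖1 + t * z‖ + (1 - t) := by
    calc ‖1 + z‖ = ‖(1 + t * z) + ((1 - t : ℝ) : ℂ) * z‖ := by push_cast; ring_nf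
      _ ≤ ‖1 + t * z‖ + (1 - t) * ‖z‖ := by
        grw [norm_add_le, norm_mul, norm_real, Real.norm_of_nonneg (sub_nonneg.2 ht1)]
      _ ≤ ‖1 + t * z‖ + (1 - t) := by nlinarith
  have hnear : 1 - t ≤ ‖1 + t * z‖ := by
    have := norm_sub_norm_le (1 : ℂ) (-(t * z))
    rw [norm_neg, norm_mul, norm_real, Real.norm_of_nonneg ht0, norm_one, sub_neg_eq_add] at this
    nlinarith
  linarith

lemma one_add_mem_slitPlane_of_norm_le_one {z : ℂ} (hz : ‖z‖ ≤ 1) (hz1 : z ≠ -1) :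
    1 + z ∈ slitPlane := by
  rw [mem_slitPlane_iff, or_iff_not_imp_right, not_not, add_re, one_re]
  intro him
  have hre : z.re ≠ -1 := fun h => hz1 (ext (by simpa using h) (by simpa using him))
  have := neg_le_of_abs_le ((abs_re_le_norm z).trans hz)
  exact lt_of_le_of_ne (by linarith) (fun h => hre (by linarith))

lemma one_add_ofReal_mul_mem_slitPlane {z : ℂ} (hz : ‖z‖ ≤ 1) (hz1 : z ≠ -1) {t : ℝ}
    (ht : t ∈ Set.Icc (0 : ℝ) 1) : 1 + t * z ∈ slitPlane := by
  have hpos : 0 < ‖1 + z‖ := norm_pos_iff.2 fun h => hz1 (by linear_combination h)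
  refine one_add_mem_slitPlane_of_norm_le_one ?_ fun h => ?_
  · rw [norm_mul, norm_real, Real.norm_of_nonneg ht.1]
    exact mul_le_one₀ ht.2 (norm_nonneg z) hz
  · have := norm_one_add_le_two_mul_norm_one_add_mul hz ht
    rw [h, add_neg_cancel, norm_zero] at this
    linarith

lemma norm_neg_mul_pow_mul_inv_mul_le {z : ℂ} (hz : ‖z‖ ≤ 1) (hz1 : z ≠ -1) {t : ℝ}
    (ht : t ∈ Set.Icc (0 : ℝ) 1) (n : ℕ) :
    ‖(-(t * z)) ^ n * (1 + t * z)⁻¹ * z‖ ≤ 2 * t ^ n / ‖1 + z‖ := by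
  have hpos : 0 < ‖1 + z‖ := norm_pos_iff.2 fun h => hz1 (by linear_combination h)
  have hnear := norm_one_add_le_two_mul_norm_one_add_mul hz ht
  have hzn : ‖z‖ ^ n * ‖z‖ ≤ 1 := by
    rw [← pow_succ]; exact pow_le_one₀ (norm_nonneg z) hz
  have htn := pow_nonneg ht.1 n
  rw [norm_mul, norm_mul, norm_pow, norm_neg, norm_mul, norm_inv, norm_real,
    Real.norm_of_nonneg ht.1, le_div_iff₀ hpos]
  calc (t * ‖z‖) ^ n * ‖1 + t * z‖⁻¹ * ‖z‖ * ‖1 + z‖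
      = t ^ n * (‖z‖ ^ n * ‖z‖) * (‖1 + z‖ / ‖1 + t * z‖) := by ring
    _ ≤ t ^ n * 1 * 2 := by
      gcongr
      rw [div_le_iff₀ (by linarith)]
      exact hnear
    _ = 2 * t ^ n := by ring

/-- Fencing `t ↦ log (1 + t z) - logTaylor (n + 1) (t z)`, whose derivative is
`(-t z)ⁿ z / (1 + t z)`, by `t ↦ 2 tⁿ⁺¹ / ((n + 1) ‖1 + z‖)`. -/
theorem norm_log_sub_logTaylor_le_of_norm_le_one (n : ℕ) {z : ℂ} (hz : ‖z‖ ≤ 1)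
    (hz1 : z ≠ -1) :
    ‖log (1 + z) - logTaylor (n + 1) z‖ ≤ 2 / ((n + 1) * ‖1 + z‖) := by
  let f : ℝ → ℂ := fun t => log (1 + t * z) - logTaylor (n + 1) (t * z)
  let B : ℝ → ℝ := fun t => 2 * t ^ (n + 1) / ((n + 1) * ‖1 + z‖)
  have hf : ∀ t ∈ Set.Icc (0 : ℝ) 1, HasDerivAt f ((-(t * z)) ^ n * (1 + t * z)⁻¹ * z) t :=
    fun t ht => by
      have := (hasDerivAt_log_sub_logTaylor n (one_add_ofReal_mul_mem_slitPlane hz hz1 ht)).comp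
        (t : ℂ) (hasDerivAt_mul_const z)
      exact this.comp_ofReal
  have hB : ∀ t, HasDerivAt B (2 * t ^ n / ‖1 + z‖) t := fun t =>
    (((hasDerivAt_pow (n + 1) t).const_mul 2).div_const _).congr_deriv (by push_cast; field_simp)
  have key := image_norm_le_of_norm_deriv_right_le_deriv_boundary (a := 0) (b := 1)
    (fun t ht => (hf t ht).continuousAt.continuousWithinAt)
    (fun t ht => (hf t (Set.Ico_subset_Icc_self ht)).hasDerivWithinAt)
    (by simp [f, B, logTaylor_at_zero]) hB
    (fun t ht => norm_neg_mul_pow_mul_inv_mul_le hz hz1 (Set.Ico_subset_Icc_self ht) n)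
    (Set.right_mem_Icc.2 zero_le_one)
  simpa [f, B] using key

lemma logTaylor_neg (n : ℕ) (z : ℂ) : logTaylor n (-z) = -∑ j ∈ range n, z ^ j / j := by
  rw [logTaylor, ← sum_neg_distrib]
  refine sum_congr rfl fun j _ => ?_
  rw [neg_pow z, ← mul_assoc, ← pow_add, Odd.neg_one_pow ⟨j, by ring⟩]
  ring

end Complex

lemma norm_sum_Icc_pow_le {ζ : ℂ} (hζ : ‖ζ‖ ≤ 1) (hζ1 : ζ ≠ 1) (k : ℕ) :
    ‖∑ j ∈ Icc 1 k, ζ ^ j‖ ≤ 2 / ‖1 - ζ‖ := by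
  rw [← Ico_add_one_right_eq_Icc, sum_Ico_eq_sum_range, add_tsub_cancel_right]
  simp_rw [pow_add, pow_one, ← mul_sum, geom_sum_eq hζ1, norm_mul, norm_div, norm_sub_rev ζ]
  have hpow : ‖ζ ^ k - 1‖ ≤ 2 := by
    grw [norm_sub_le, norm_pow, pow_le_one₀ (norm_nonneg ζ) hζ, norm_one]; norm_num
  calc ‖ζ‖ * (‖ζ ^ k - 1‖ / ‖1 - ζ‖) ≤ 1 * (2 / ‖1 - ζ‖) := by gcongr
    _ = 2 / ‖1 - ζ‖ := one_mul _

namespace UnitAddCircle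

lemma norm_le_half (x : UnitAddCircle) : ‖x‖ ≤ 1 / 2 := by
  simpa using AddCircle.norm_le_half_period (1 : ℝ) one_ne_zero (x := x)

lemma two_mul_norm_le_abs_sin_pi_mul (x : ℝ) : 2 * ‖(x : UnitAddCircle)‖ ≤ |sin (π * x)| := by
  set δ := x - round x with hδ
  have hshift : |sin (π * x)| = |sin (π * δ)| := by
    rw [hδ, mul_sub, mul_comm π (round x : ℝ), sin_sub_int_mul_pi, abs_mul, abs_zpow, abs_neg,
      abs_one, one_zpow, one_mul]
  have hπ : |π * δ| ≤ π / 2 := by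
    rw [abs_mul, abs_of_pos pi_pos]; nlinarith [pi_pos, abs_sub_round x]
  rw [norm_eq, hshift, abs_sin_eq_sin_abs_of_abs_le_pi (by linarith [pi_pos])]
  calc 2 * |δ| = 2 / π * |π * δ| := by rw [abs_mul, abs_of_pos pi_pos]; field_simp
    _ ≤ sin |π * δ| := mul_le_sin (abs_nonneg _) hπ

lemma norm_one_sub_toCircle (x : ℝ) :
    ‖1 - (AddCircle.toCircle (x : UnitAddCircle) : ℂ)‖ = 2 * |sin (π * x)| := by
  rw [AddCircle.toCircle_apply_mk, Circle.coe_exp, norm_sub_rev, mul_comm,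
    Complex.norm_exp_I_mul_ofReal_sub_one, norm_mul, Real.norm_two, Real.norm_eq_abs]
  ring_nf

lemma four_mul_norm_le_norm_one_sub_toCircle (θ : UnitAddCircle) :
    4 * ‖θ‖ ≤ ‖1 - (AddCircle.toCircle θ : ℂ)‖ := by
  induction θ using QuotientAddGroup.induction_on with
  | H x =>
    rw [norm_one_sub_toCircle]
    linarith [two_mul_norm_le_abs_sin_pi_mul x]

lemma four_mul_norm_nsmul_le_norm_one_sub_pow (θ : UnitAddCircle) (r : ℕ) :
    4 * ‖r • θ‖ ≤ ‖1 - (AddCircle.toCircle θ : ℂ) ^ r‖ := by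
  simpa [AddCircle.toCircle_nsmul] using four_mul_norm_le_norm_one_sub_toCircle (r • θ)

lemma log_two_sub_two_cos_two_pi_mul (x : ℝ) :
    log (2 - 2 * cos (2 * π * x)) =
      2 * (Complex.log (1 - AddCircle.toCircle (x : UnitAddCircle))).re := by
  have hsq : 2 - 2 * cos (2 * π * x) = (2 * |sin (π * x)|) ^ 2 := by
    rw [mul_pow, sq_abs, show 2 * π * x = 2 * (π * x) by ring, cos_two_mul_eq_one_sub]
    ring
  rw [Complex.log_re, norm_one_sub_toCircle, hsq, Real.log_pow]
  norm_num

lemma toCircle_natCast_mul (α : ℝ) (j : ℕ) :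
    (AddCircle.toCircle ((j * α : ℝ) : UnitAddCircle) : ℂ) =
      (AddCircle.toCircle (α : UnitAddCircle) : ℂ) ^ j := by
  rw [← nsmul_eq_mul, AddCircle.coe_nsmul, AddCircle.toCircle_nsmul, Circle.coe_pow]

end UnitAddCircle

lemma norm_sum_logTaylor_neg_pow_le {θ : UnitAddCircle} (hθ : ∀ r : ℕ, 0 < r → 0 < ‖r • θ‖)
    (k R : ℕ) :
    ‖∑ j ∈ Icc 1 k, Complex.logTaylor (R + 1) (-(AddCircle.toCircle θ : ℂ) ^ j)‖ ≤
      1 / 2 * ∑ r ∈ Icc 1 R, (r * ‖r • θ‖)⁻¹ := by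
  set ζ : ℂ := (AddCircle.toCircle θ : ℂ)
  have hswap : ∑ j ∈ Icc 1 k, Complex.logTaylor (R + 1) (-ζ ^ j)
      = -∑ r ∈ range (R + 1), (∑ j ∈ Icc 1 k, (ζ ^ r) ^ j) / r := by
    simp_rw [Complex.logTaylor_neg, sum_neg_distrib, sum_div]
    exact congrArg Neg.neg
      (sum_comm.trans (sum_congr rfl fun r _ => sum_congr rfl fun j _ => by ring))
  have hterm : ∀ r ∈ Icc 1 R, ‖∑ j ∈ Icc 1 k, (ζ ^ r) ^ j‖ / r ≤ 1 / 2 * (r * ‖r • θ‖)⁻¹ := by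
    intro r hr
    have hpos := hθ r (mem_Icc.1 hr).1
    have hfar := UnitAddCircle.four_mul_norm_nsmul_le_norm_one_sub_pow θ r
    have hne : ζ ^ r ≠ 1 := by
      intro h; rw [h, sub_self, norm_zero] at hfar; linarith
    have hζ : ‖ζ ^ r‖ ≤ 1 := by rw [norm_pow, Circle.norm_coe, one_pow]
    calc ‖∑ j ∈ Icc 1 k, (ζ ^ r) ^ j‖ / r ≤ 2 / ‖1 - ζ ^ r‖ / r := by
          gcongr; exact norm_sum_Icc_pow_le hζ hne k
      _ ≤ 2 / (4 * ‖r • θ‖) / r := by gcongr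
      _ = 1 / 2 * (r * ‖r • θ‖)⁻¹ := by field_simp; ring
  -- the `r = 0` term of `hswap` is `x / 0 = 0`
  rw [hswap, norm_neg, range_eq_Ico, sum_eq_sum_Ico_succ_bot R.succ_pos, zero_add,
    Nat.succ_eq_add_one, Ico_add_one_right_eq_Icc, Nat.cast_zero, div_zero, zero_add, mul_sum]
  exact (norm_sum_le _ _).trans (sum_le_sum fun r hr => by
    rw [norm_div, Complex.norm_natCast]; exact hterm r hr)

lemma norm_sub_nsmul_le {E : Type*} [SeminormedAddGroup E] (x : E) {r r' : ℕ} (h : r ≤ r') :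
    ‖(r' - r) • x‖ ≤ ‖r' • x‖ + ‖r • x‖ := by
  rw [sub_nsmul x h, ← sub_eq_add_neg]
  exact norm_sub_le (r' • x) (r • x)

lemma pow_log_floor_le {b : ℕ} {x : ℝ} (hx : 1 ≤ x) : (b : ℝ) ^ Nat.log b ⌊x⌋₊ ≤ x :=
  calc (b : ℝ) ^ Nat.log b ⌊x⌋₊ ≤ ⌊x⌋₊ := by
        exact_mod_cast Nat.pow_log_le_self b (Nat.floor_pos.2 hx).ne'
    _ ≤ x := Nat.floor_le (by linarith)

lemma lt_pow_log_floor_succ {b : ℕ} (hb : 1 < b) (x : ℝ) :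
    x < (b : ℝ) ^ (Nat.log b ⌊x⌋₊ + 1) :=
  calc x < ⌊x⌋₊ + 1 := Nat.lt_floor_add_one x
    _ ≤ (b : ℝ) ^ (Nat.log b ⌊x⌋₊ + 1) := by exact_mod_cast Nat.lt_pow_succ_log_self hb _

/-- The map `r ↦ r / d` is injective on a `d`-separated set and `r⁻¹ ≤ d⁻¹ (r / d)⁻¹`. -/
lemma sum_inv_le_of_separated {A : Finset ℕ} {d R : ℕ} (hd : 0 < d)
    (hA : ∀ r ∈ A, d ≤ r ∧ r ≤ R) (hsep : ∀ r ∈ A, ∀ r' ∈ A, r < r' → r + d ≤ r') :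
    ∑ r ∈ A, (r : ℝ)⁻¹ ≤ (1 + log R) / d := by
  have hinj : Set.InjOn (· / d) A := by
    intro r hr r' hr' h
    by_contra hne
    rcases Nat.lt_or_gt_of_ne hne with hlt | hlt
    · have := Nat.div_le_div_right (c := d) (hsep r hr r' hr' hlt)
      simp only [Nat.add_div_right r hd] at this h
      omega
    · have := Nat.div_le_div_right (c := d) (hsep r' hr' r hr hlt)
      simp only [Nat.add_div_right r' hd] at this h
      omega
  have himage : A.image (· / d) ⊆ Icc 1 R := by
    simp only [subset_iff, mem_image, mem_Icc]
    rintro _ ⟨r, hr, rfl⟩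
    exact ⟨(Nat.one_le_div_iff hd).2 (hA r hr).1, (Nat.div_le_self r d).trans (hA r hr).2⟩
  calc ∑ r ∈ A, (r : ℝ)⁻¹ ≤ ∑ r ∈ A, (d : ℝ)⁻¹ * ((r / d : ℕ) : ℝ)⁻¹ := by
        refine sum_le_sum fun r hr => ?_
        have hq : 0 < r / d := (Nat.one_le_div_iff hd).2 (hA r hr).1
        rw [← mul_inv]
        refine inv_anti₀ (by positivity) ?_
        exact_mod_cast Nat.mul_div_le r d
    _ = (d : ℝ)⁻¹ * ∑ q ∈ A.image (· / d), (q : ℝ)⁻¹ := by rw [mul_sum, sum_image hinj]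
    _ ≤ (d : ℝ)⁻¹ * ∑ q ∈ Icc 1 R, (q : ℝ)⁻¹ := by gcongr
    _ ≤ (1 + log R) / d := by
        rw [← div_eq_inv_mul]
        gcongr
        simpa [harmonic_eq_sum_Icc] using harmonic_le_one_add_log R

/-- `‖r • θ‖` is the distance from `r θ` to the nearest integer (`UnitAddCircle.norm_eq`). -/
def BadlyApproximable (c : ℝ) (θ : UnitAddCircle) : Prop :=
  ∀ r : ℕ, 0 < r → c ≤ r * ‖r • θ‖

namespace BadlyApproximable

variable {θ : UnitAddCircle} {c : ℝ}

lemma norm_nsmul_pos (hθ : BadlyApproximable c θ) (hc : 0 < c) {r : ℕ} (hr : 0 < r) :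
    0 < ‖r • θ‖ :=
  pos_of_mul_pos_right (hc.trans_le (hθ r hr)) (Nat.cast_nonneg r)

lemma le_half (hθ : BadlyApproximable c θ) : c ≤ 1 / 2 := by
  simpa using (hθ 1 one_pos).trans (by simpa using UnitAddCircle.norm_le_half θ)

lemma sum_inv_mul_norm_nsmul_le_of_dyadic (hθ : BadlyApproximable c θ) (hc : 0 < c)
    {A : Finset ℕ} {R y : ℕ}
    (hA : ∀ r ∈ A, 0 < r ∧ r ≤ R ∧ 2 ^ y ≤ ‖r • θ‖⁻¹ ∧ ‖r • θ‖⁻¹ < 2 ^ (y + 1)) :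
    ∑ r ∈ A, (r * ‖r • θ‖)⁻¹ ≤ 4 / c * (1 + log R) := by
  have hnorm_le : ∀ r ∈ A, ‖r • θ‖ ≤ (2 ^ y)⁻¹ := fun r hr =>
    (le_inv_comm₀ (by positivity) (hθ.norm_nsmul_pos hc (hA r hr).1)).1 (hA r hr).2.2.1
  set d := ⌈c * 2 ^ y / 2⌉₊
  have hd : 0 < d := Nat.ceil_pos.2 (by positivity)
  have hmem : ∀ r ∈ A, d ≤ r ∧ r ≤ R := by
    intro r hr
    refine ⟨Nat.ceil_le.2 ?_, (hA r hr).2.1⟩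
    have h := (hθ r (hA r hr).1).trans
      (mul_le_mul_of_nonneg_left (hnorm_le r hr) (Nat.cast_nonneg r))
    rw [← div_eq_mul_inv, le_div_iff₀ (by positivity)] at h
    linarith [mul_pos hc (pow_pos two_pos y)]
  have hsep : ∀ r ∈ A, ∀ r' ∈ A, r < r' → r + d ≤ r' := by
    intro r hr r' hr' hlt
    suffices d ≤ r' - r by omega
    refine Nat.ceil_le.2 ?_
    have h := (hθ (r' - r) (by omega)).trans (mul_le_mul_of_nonneg_left
      ((norm_sub_nsmul_le θ hlt.le).trans (add_le_add (hnorm_le r' hr') (hnorm_le r hr)))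
      (Nat.cast_nonneg _))
    rw [← two_mul, ← mul_assoc, ← div_eq_mul_inv, le_div_iff₀ (by positivity)] at h
    linarith
  have hlog : 0 ≤ 1 + log R := by linarith [Real.log_natCast_nonneg R]
  have hd' : (0 : ℝ) < d := by exact_mod_cast hd
  calc ∑ r ∈ A, (r * ‖r • θ‖)⁻¹ ≤ ∑ r ∈ A, 2 ^ (y + 1) * (r : ℝ)⁻¹ := by
        refine sum_le_sum fun r hr => ?_
        rw [mul_inv, mul_comm]
        gcongr
        exact (hA r hr).2.2.2.le
    _ ≤ 2 ^ (y + 1) * ((1 + log R) / d) := by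
        rw [← mul_sum]
        gcongr
        exact sum_inv_le_of_separated hd hmem hsep
    _ = 2 ^ (y + 1) / d * (1 + log R) := by ring
    _ ≤ 4 / c * (1 + log R) := by
        refine mul_le_mul_of_nonneg_right ?_ hlog
        rw [div_le_div_iff₀ hd' hc, pow_succ]
        linarith [Nat.le_ceil (c * 2 ^ y / 2)]

theorem sum_inv_mul_norm_nsmul_le (hθ : BadlyApproximable c θ) (hc : 0 < c) {R : ℕ}
    (hR : 0 < R) :
    ∑ r ∈ Icc 1 R, (r * ‖r • θ‖)⁻¹ ≤ 4 / c * (1 + log R) * (1 + logb 2 (R / c)) := by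
  have hinv_le : ∀ r ∈ Icc 1 R, ‖r • θ‖⁻¹ ≤ R / c := by
    intro r hr
    rw [mem_Icc] at hr
    have hpos := hθ.norm_nsmul_pos hc hr.1
    calc ‖r • θ‖⁻¹ = 1 / ‖r • θ‖ := (one_div _).symm
      _ ≤ r / c := by rw [div_le_div_iff₀ hpos hc, one_mul]; exact hθ r hr.1
      _ ≤ R / c := by gcongr; exact_mod_cast hr.2
  have hinv_ge : ∀ r ∈ Icc 1 R, 1 ≤ ‖r • θ‖⁻¹ := fun r hr =>
    one_le_inv_iff₀.2 ⟨hθ.norm_nsmul_pos hc (mem_Icc.1 hr).1,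
      (UnitAddCircle.norm_le_half _).trans (by norm_num)⟩
  set N := Nat.log 2 ⌊(R / c : ℝ)⌋₊
  have hmaps : ∀ r ∈ Icc 1 R, Nat.log 2 ⌊‖r • θ‖⁻¹⌋₊ ∈ range (N + 1) := fun r hr =>
    mem_range_succ_iff.2 (Nat.log_mono_right (Nat.floor_le_floor (hinv_le r hr)))
  have hN : (N : ℝ) ≤ logb 2 (R / c) := by
    have hRc : 1 ≤ (R / c : ℝ) := by
      rw [le_div_iff₀ hc]
      have : (1 : ℝ) ≤ R := by exact_mod_cast hR
      linarith [hθ.le_half]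
    rw [Real.le_logb_iff_rpow_le one_lt_two (by linarith), rpow_natCast]
    exact_mod_cast pow_log_floor_le (b := 2) hRc
  rw [← sum_fiberwise_of_maps_to hmaps]
  calc ∑ y ∈ range (N + 1), ∑ r ∈ Icc 1 R with Nat.log 2 ⌊‖r • θ‖⁻¹⌋₊ = y, (r * ‖r • θ‖)⁻¹
      ≤ ∑ y ∈ range (N + 1), 4 / c * (1 + log R) := by
        refine sum_le_sum fun y _ => hθ.sum_inv_mul_norm_nsmul_le_of_dyadic (y := y) hc ?_
        intro r hr
        obtain ⟨hrR, rfl⟩ := mem_filter.1 hr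
        exact ⟨(mem_Icc.1 hrR).1, (mem_Icc.1 hrR).2,
          by exact_mod_cast pow_log_floor_le (b := 2) (hinv_ge r hrR),
          by exact_mod_cast lt_pow_log_floor_succ one_lt_two _⟩
    _ ≤ 4 / c * (1 + log R) * (1 + logb 2 (R / c)) := by
        rw [sum_const, card_range, nsmul_eq_mul, mul_comm]
        gcongr
        push_cast
        linarith

lemma norm_sum_log_sub_logTaylor_le (hθ : BadlyApproximable c θ) (hc : 0 < c) (k R : ℕ) :
    ‖∑ j ∈ Icc 1 k, (Complex.log (1 - (AddCircle.toCircle θ : ℂ) ^ j) -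
      Complex.logTaylor (R + 1) (-(AddCircle.toCircle θ : ℂ) ^ j))‖ ≤
        k ^ 2 / (2 * c * (R + 1)) := by
  set ζ : ℂ := (AddCircle.toCircle θ : ℂ)
  have hterm : ∀ j ∈ Icc 1 k,
      ‖Complex.log (1 - ζ ^ j) - Complex.logTaylor (R + 1) (-ζ ^ j)‖ ≤
        k / (2 * c * (R + 1)) := by
    intro j hj
    obtain ⟨hj1, hjk⟩ := mem_Icc.1 hj
    have hfar : 4 * c ≤ k * ‖1 - ζ ^ j‖ := by
      have hj : (j : ℝ) ≤ k := by exact_mod_cast hjk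
      nlinarith [hθ j hj1, UnitAddCircle.four_mul_norm_nsmul_le_norm_one_sub_pow θ j,
        norm_nonneg (1 - ζ ^ j)]
    have hpos : 0 < ‖1 - ζ ^ j‖ := by
      rcases (norm_nonneg (1 - ζ ^ j)).lt_or_eq with h | h
      · exact h
      · rw [← h, mul_zero] at hfar; linarith
    have hne : -ζ ^ j ≠ -1 := by
      rw [Ne, neg_inj]
      rintro h
      rw [h, sub_self, norm_zero] at hpos
      exact hpos.false
    have hnorm : ‖-ζ ^ j‖ ≤ 1 := by rw [norm_neg, norm_pow, Circle.norm_coe, one_pow]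
    calc ‖Complex.log (1 - ζ ^ j) - Complex.logTaylor (R + 1) (-ζ ^ j)‖
        ≤ 2 / ((R + 1) * ‖1 - ζ ^ j‖) := by
          simpa [← sub_eq_add_neg] using
            Complex.norm_log_sub_logTaylor_le_of_norm_le_one R hnorm hne
      _ ≤ k / (2 * c * (R + 1)) := by
          rw [div_le_div_iff₀ (by positivity) (by positivity)]
          nlinarith
  calc _ ≤ ∑ j ∈ Icc 1 k, ‖Complex.log (1 - ζ ^ j) - Complex.logTaylor (R + 1) (-ζ ^ j)‖ :=
        norm_sum_le _ _
    _ ≤ ∑ j ∈ Icc 1 k, k / (2 * c * (R + 1)) := sum_le_sum hterm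
    _ = k ^ 2 / (2 * c * (R + 1)) := by
        rw [sum_const, Nat.card_Icc, add_tsub_cancel_right, nsmul_eq_mul]; ring

theorem norm_sum_log_one_sub_pow_le (hθ : BadlyApproximable c θ) (hc : 0 < c) (k R : ℕ) :
    ‖∑ j ∈ Icc 1 k, Complex.log (1 - (AddCircle.toCircle θ : ℂ) ^ j)‖ ≤
      k ^ 2 / (2 * c * (R + 1)) + 1 / 2 * ∑ r ∈ Icc 1 R, (r * ‖r • θ‖)⁻¹ := by
  rw [← sub_add_cancel (∑ j ∈ Icc 1 k, Complex.log (1 - (AddCircle.toCircle θ : ℂ) ^ j))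
    (∑ j ∈ Icc 1 k, Complex.logTaylor (R + 1) (-(AddCircle.toCircle θ : ℂ) ^ j)),
    ← sum_sub_distrib]
  exact (norm_add_le _ _).trans (add_le_add (hθ.norm_sum_log_sub_logTaylor_le hc k R)
    (norm_sum_logTaylor_neg_pow_le (fun _ hr => hθ.norm_nsmul_pos hc hr) k R))

variable {α : ℝ}

theorem abs_sum_log_two_sub_two_cos_le (hα : BadlyApproximable c α) (hc : 0 < c) (k : ℕ)
    {R : ℕ} (hR : 0 < R) :
    |∑ j ∈ Icc 1 k, log (2 - 2 * cos (2 * π * (j * α)))| ≤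
      k ^ 2 / (c * (R + 1)) + 4 / c * (1 + log R) * (1 + logb 2 (R / c)) := by
  have hsum : ∑ j ∈ Icc 1 k, log (2 - 2 * cos (2 * π * (j * α))) =
      2 * (∑ j ∈ Icc 1 k,
        Complex.log (1 - (AddCircle.toCircle (α : UnitAddCircle) : ℂ) ^ j)).re := by
    simp_rw [UnitAddCircle.log_two_sub_two_cos_two_pi_mul, UnitAddCircle.toCircle_natCast_mul,
      Complex.re_sum, mul_sum]
  rw [hsum, abs_mul, abs_two]
  calc 2 * |_| ≤ 2 * (k ^ 2 / (2 * c * (R + 1)) +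
        1 / 2 * (4 / c * (1 + log R) * (1 + logb 2 (R / c)))) := by
        gcongr
        exact (Complex.abs_re_le_norm _).trans ((hα.norm_sum_log_one_sub_pow_le hc k R).trans
          (by gcongr; exact hα.sum_inv_mul_norm_nsmul_le hc hR))
    _ = _ := by field_simp

theorem exists_abs_sum_log_two_sub_two_cos_le_mul_log_sq (hα : BadlyApproximable c α)
    (hc : 0 < c) :
    ∃ C > 0, ∀ k : ℕ, 2 ≤ k →
      |∑ j ∈ Icc 1 k, log (2 - 2 * cos (2 * π * (j * α)))| ≤ C * log k ^ 2 := by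
  refine ⟨4 / c * (25 + 16 * |log c|), by positivity, fun k hk => ?_⟩
  have hk2 : (2 : ℝ) ≤ k := by exact_mod_cast hk
  set L := log k
  have hL : 1 ≤ 2 * L := by linarith [log_two_gt_d9, log_le_log two_pos hk2]
  have hlogR : log ((k ^ 2 : ℕ) : ℝ) = 2 * L := by
    rw [Nat.cast_pow, Real.log_pow]; push_cast; ring
  have hRc : 1 ≤ ((k ^ 2 : ℕ) : ℝ) / c := by
    rw [le_div_iff₀ hc]; push_cast; nlinarith [hα.le_half]
  have hlogb : 1 + logb 2 ((k ^ 2 : ℕ) / c) ≤ (6 + 4 * |log c|) * L := by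
    have hdiv : logb 2 ((k ^ 2 : ℕ) / c) ≤ 2 * log ((k ^ 2 : ℕ) / c) := by
      rw [logb, div_le_iff₀ (log_pos one_lt_two)]
      nlinarith [log_nonneg hRc, log_two_gt_d9]
    rw [Real.log_div (by positivity) hc.ne', hlogR] at hdiv
    nlinarith [neg_abs_le (log c), abs_nonneg (log c)]
  have hfrac : (k ^ 2 : ℝ) / (c * ((k ^ 2 : ℕ) + 1)) ≤ 4 / c * L ^ 2 :=
    calc (k ^ 2 : ℝ) / (c * ((k ^ 2 : ℕ) + 1)) ≤ 1 / c := by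
          rw [div_le_div_iff₀ (by positivity) hc]; push_cast; nlinarith
      _ ≤ 4 / c * L ^ 2 := by
          rw [div_mul_eq_mul_div, div_le_div_iff_of_pos_right hc]; nlinarith
  calc _ ≤ (k ^ 2 : ℝ) / (c * ((k ^ 2 : ℕ) + 1)) +
        4 / c * (1 + log ((k ^ 2 : ℕ) : ℝ)) * (1 + logb 2 ((k ^ 2 : ℕ) / c)) :=
        hα.abs_sum_log_two_sub_two_cos_le hc k (by positivity)
    _ ≤ 4 / c * L ^ 2 + 4 / c * (4 * L) * ((6 + 4 * |log c|) * L) := by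
        rw [hlogR]
        gcongr
        · linarith [logb_nonneg one_lt_two hRc]
        · linarith
    _ = 4 / c * (25 + 16 * |log c|) * L ^ 2 := by ring

end BadlyApproximable

theorem one_le_three_mul_mul_abs_mul_goldenConj_add {r : ℕ} (hr : 0 < r) (p : ℤ) :
    1 ≤ 3 * r * |r * ψ + p| := by
  have hnorm : (r * ψ + p) * (r * φ + p) = ((p ^ 2 + r * p - r ^ 2 : ℤ) : ℝ) := by
    push_cast
    linear_combination (r : ℝ) ^ 2 * goldenConj_mul_goldenRatio + r * p * goldenRatio_add_goldenConj
  have hN : p ^ 2 + r * p - r ^ 2 ≠ 0 := by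
    intro h
    rw [h, Int.cast_zero, mul_eq_zero] at hnorm
    rcases hnorm with h | h
    · exact ((goldenConj_irrational.natCast_mul hr.ne').add_intCast p).ne_zero h
    · exact ((goldenRatio_irrational.natCast_mul hr.ne').add_intCast p).ne_zero h
  have hprod : 1 ≤ |r * ψ + p| * |r * φ + p| := by
    rw [← abs_mul, hnorm]; exact_mod_cast Int.one_le_abs hN
  have hsqrt5 : √5 < 9 / 4 := by
    rw [Real.sqrt_lt' (by norm_num)]; norm_num
  have hconj : |r * φ + p| ≤ |r * ψ + p| + 9 / 4 * r := by
    rw [show r * φ + p = (r * ψ + p) + r * √5 by rw [← goldenRatio_sub_goldenConj]; ring]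
    grw [abs_add_le, abs_of_nonneg (by positivity : (0 : ℝ) ≤ r * √5)]
    nlinarith
  have hr1 : (1 : ℝ) ≤ r := by exact_mod_cast hr
  by_contra! h
  have hb := abs_nonneg (r * ψ + p)
  have hb3 : 3 * |r * ψ + p| < 1 := by nlinarith
  nlinarith [mul_le_mul_of_nonneg_left hconj hb]

theorem badlyApproximable_golden :
    BadlyApproximable (1 / 3) (((√5 - 1) / 2 : ℝ) : UnitAddCircle) := by
  intro r hr
  rw [← AddCircle.coe_nsmul, nsmul_eq_mul, UnitAddCircle.norm_eq]
  set p := round ((r : ℝ) * ((√5 - 1) / 2))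
  rw [show (r : ℝ) * ((√5 - 1) / 2) - p = -(r * ψ + p) by rw [goldenConj]; ring, abs_neg]
  linarith [one_le_three_mul_mul_abs_mul_goldenConj_add hr p]

/-- For the golden mean `α = (√5 - 1)/2`, `g x = log (2 - 2 cos (2π x))` and the Birkhoff
sums `S k = ∑_{j=1}^{k} g (j α)`, there is a constant `C > 0` such that
`|S k| ≤ C (log k)²` for all `k ≥ 2`. -/
theorem birkhoff_sum_log_squared_bound (α : ℝ) (hα : α = (Real.sqrt 5 - 1) / 2)
    (g : ℝ → ℝ) (hg : ∀ x, g x = Real.log (2 - 2 * Real.cos (2 * Real.pi * x)))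
    (S : ℕ → ℝ) (hS : ∀ k, S k = ∑ j ∈ Finset.Icc 1 k, g (j * α)) :
    ∃ C > 0, ∀ k : ℕ, 2 ≤ k → |S k| ≤ C * (Real.log k) ^ 2 := by
  subst hα
  obtain ⟨C, hC, hbound⟩ :=
    badlyApproximable_golden.exists_abs_sum_log_two_sub_two_cos_le_mul_log_sq (by norm_num)
  exact ⟨C, hC, fun k hk => by simpa only [hS, hg] using hbound k hk⟩
end

section
/- Let α = (√5 - 1)/2, g(x) = log(2 - 2cos(2πx)), S_k(α) = ∑_{j=1}^{k} g(jα), and let F_n be the Fibonacci numbers. If the sequence S_{F_n - 1}(α) − 2 log F_n converges to a limit L as n → ∞, then S_{F_n}(α) converges to log(4π²/5) + L. -/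
/-!
Since `F_n α = F_{n-1} - ψ^n` with `ψ = -α` the Galois conjugate of the golden ratio, the new
term `g (F_n α) = S_{F_n} - S_{F_n - 1}` equals `log (2 - 2 cos (2π ψ^n))`. As `ψ^n → 0` and
`F_n ψ^n → ±1/√5`, this is `log (4π² ψ^{2n}) + o(1) = log (4π²/5) - 2 log F_n + o(1)`.
-/

open Real Finset Filter Topology goldenRatio

namespace Real

lemma two_sub_two_cos_two_pi_mul (x : ℝ) :
    2 - 2 * cos (2 * π * x) = (2 * π * x * sinc (π * x)) ^ 2 := by
  rcases eq_or_ne x 0 with rfl | hx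
  · simp
  have hπx : π * x ≠ 0 := mul_ne_zero pi_ne_zero hx
  rw [sinc_of_ne_zero hπx, show 2 * π * x = 2 * (π * x) by ring, cos_two_mul_eq_one_sub]
  field_simp
  ring

lemma tendsto_fib_div_goldenRatio_pow :
    Tendsto (fun n : ℕ => (Nat.fib n : ℝ) / φ ^ n) atTop (𝓝 (1 / √5)) := by
  have hratio : |ψ / φ| < 1 := by
    rw [abs_div, abs_of_pos goldenRatio_pos, div_lt_one goldenRatio_pos,
      abs_of_neg goldenConj_neg]
    linarith [neg_one_lt_goldenConj, one_lt_goldenRatio]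
  have hlim := ((tendsto_pow_atTop_nhds_zero_of_abs_lt_one hratio).const_sub 1).div_const √5
  rw [sub_zero] at hlim
  refine hlim.congr fun n => ?_
  rw [coe_fib_eq, div_pow]
  field_simp [pow_ne_zero n goldenRatio_ne_zero]

lemma tendsto_fib_mul_goldenConj_pow_sq :
    Tendsto (fun n : ℕ => ((Nat.fib n : ℝ) * ψ ^ n) ^ 2) atTop (𝓝 (1 / 5)) := by
  have hlim := tendsto_fib_div_goldenRatio_pow.pow 2
  rw [div_pow, sq_sqrt (by norm_num : (0 : ℝ) ≤ 5), one_pow] at hlim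
  have hsq : ψ ^ 2 = φ⁻¹ ^ 2 := by rw [inv_goldenRatio, neg_sq]
  refine hlim.congr fun n => ?_
  rw [mul_pow, ← pow_mul, mul_comm n, pow_mul, hsq, ← pow_mul, inv_pow, pow_mul', div_pow,
    div_eq_mul_inv]

lemma cos_two_pi_mul_fib_mul_inv_goldenRatio (n : ℕ) :
    cos (2 * π * (Nat.fib n * φ⁻¹)) = cos (2 * π * ψ ^ n) := by
  cases n with
  | zero => simp
  | succ n =>
    have hshift :
        2 * π * (Nat.fib (n + 1) * -ψ) = Nat.fib n * (2 * π) - 2 * π * ψ ^ (n + 1) := by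
      rw [← goldenConj_mul_fib_succ_add_fib]
      ring
    rw [inv_goldenRatio, hshift, cos_nat_mul_two_pi_sub]

lemma tendsto_two_sub_two_cos_fib_mul_inv_goldenRatio_mul_fib_sq :
    Tendsto (fun n : ℕ => (2 - 2 * cos (2 * π * (Nat.fib n * φ⁻¹))) * (Nat.fib n : ℝ) ^ 2)
      atTop (𝓝 (4 * π ^ 2 / 5)) := by
  have hψ : Tendsto (fun n : ℕ => ψ ^ n) atTop (𝓝 0) :=
    tendsto_pow_atTop_nhds_zero_of_abs_lt_one <| abs_lt.2 ⟨neg_one_lt_goldenConj, by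
      linarith [goldenConj_neg]⟩
  have hsinc : Tendsto (fun n : ℕ => sinc (π * ψ ^ n)) atTop (𝓝 1) := by
    simpa only [mul_zero, sinc_zero, Function.comp_def] using
      (continuous_sinc.tendsto _).comp (hψ.const_mul π)
  have hlim := ((hsinc.const_mul (2 * π)).pow 2).mul tendsto_fib_mul_goldenConj_pow_sq
  rw [show (2 * π * 1) ^ 2 * (1 / 5) = 4 * π ^ 2 / 5 by ring] at hlim
  refine hlim.congr fun n => ?_
  rw [cos_two_pi_mul_fib_mul_inv_goldenRatio, two_sub_two_cos_two_pi_mul]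
  ring

lemma tendsto_log_two_sub_two_cos_fib_mul_inv_goldenRatio_add_two_log_fib :
    Tendsto (fun n : ℕ => log (2 - 2 * cos (2 * π * (Nat.fib n * φ⁻¹))) + 2 * log (Nat.fib n))
      atTop (𝓝 (log (4 * π ^ 2 / 5))) := by
  have hlim := tendsto_two_sub_two_cos_fib_mul_inv_goldenRatio_mul_fib_sq
  have hne : ∀ᶠ n : ℕ in atTop,
      (2 - 2 * cos (2 * π * (Nat.fib n * φ⁻¹))) * (Nat.fib n : ℝ) ^ 2 ≠ 0 :=
    hlim.eventually_ne (by positivity)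
  refine ((continuousAt_log (by positivity)).tendsto.comp hlim).congr' ?_
  filter_upwards [hne] with n hn
  rw [Function.comp_apply, log_mul (left_ne_zero_of_mul hn) (right_ne_zero_of_mul hn), log_pow]
  norm_num

end Real

lemma Finset.sum_Icc_one_eq_sum_Icc_one_sub_one_add {M : Type*} [AddCommMonoid M] (f : ℕ → M)
    {k : ℕ} (hk : 1 ≤ k) : ∑ j ∈ Icc 1 k, f j = ∑ j ∈ Icc 1 (k - 1), f j + f k := by
  obtain ⟨m, rfl⟩ := Nat.exists_eq_add_of_le' hk
  rw [Nat.add_sub_cancel, sum_Icc_succ_top (by omega)]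

/-- For the golden mean `α`, `g x = log (2 - 2 cos (2π x))`, Birkhoff sums
`S k = ∑_{j=1}^{k} g (j α)` and the Fibonacci numbers `F n`: if
`S (F n - 1) - 2 log (F n) → L`, then `S (F n) → log (4π²/5) + L`. -/
theorem birkhoff_sum_fib_limit_of_sub_one_limit (α : ℝ) (hα : α = (Real.sqrt 5 - 1) / 2)
    (g : ℝ → ℝ) (hg : ∀ x, g x = Real.log (2 - 2 * Real.cos (2 * Real.pi * x)))
    (S : ℕ → ℝ) (hS : ∀ k, S k = ∑ j ∈ Finset.Icc 1 k, g (j * α))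
    (L : ℝ)
    (hL : Tendsto (fun n : ℕ => S (Nat.fib n - 1) - 2 * Real.log (Nat.fib n)) atTop (nhds L)) :
    Tendsto (fun n : ℕ => S (Nat.fib n)) atTop (nhds (Real.log (4 * Real.pi ^ 2 / 5) + L)) := by
  have hα_inv : α = φ⁻¹ := by rw [hα, inv_goldenRatio]; ring
  have hlast : Tendsto (fun n : ℕ => g (Nat.fib n * α) + 2 * log (Nat.fib n)) atTop
      (𝓝 (log (4 * π ^ 2 / 5))) := by
    simpa only [hg, hα_inv] using
      tendsto_log_two_sub_two_cos_fib_mul_inv_goldenRatio_add_two_log_fib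
  have hsplit :
      ∀ᶠ n : ℕ in atTop, S (Nat.fib n) = S (Nat.fib n - 1) + g (Nat.fib n * α) := by
    filter_upwards [eventually_ge_atTop 1] with n hn
    rw [hS, hS, sum_Icc_one_eq_sum_Icc_one_sub_one_add _ (Nat.fib_pos.2 hn)]
  rw [add_comm]
  refine (hL.add hlast).congr' ?_
  filter_upwards [hsplit] with n hn
  rw [hn]
  ring
end
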